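/- arXiv:1211.5066 — 3 statements merged into one kernel-verified Lean document; each statement's English description precedes it below -/
import Mathlib

section
/- Let $F_1,\dots,F_N$ be $\mathbb{R}$-linearly independent elements of $L^1(X,\nu)$ and $\epsilon>0$. Then there exist $\mathbb{R}$-linearly independent simple functions $s_1,\dots,s_N$ and $\mathbb{R}$-linearly independent simple functions $t_1,\dots,t_N$ on $X$ such that $\sum_{l=1}^N\|F_l-s_l\|_1 < \epsilon$, $\sum_{l=1}^N\|F_l-t_l\|_1 < \epsilon$, and for all $\xi\in\mathbb{R}^N$ one has $\|\sum_l \xi_l s_l\|_1 \le \|\sum_l \xi_l F_l\|_1 \le \|\sum_l \xi_l t_l\|_1$. -/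
/-!
The map `ξ ↦ ∑ ξₗ Fₗ` from `ℝᴺ` to `L¹` is injective, hence bounded below by some `m ‖ξ‖`,
`ℝᴺ` being finite-dimensional. If simple functions `gₗ` satisfy `∑ ‖Fₗ - gₗ‖ ≤ η m / 2`, then
`|‖∑ ξₗ Fₗ‖ - ‖∑ ξₗ gₗ‖| ≤ η ‖∑ ξₗ Fₗ‖ / 2`, so `sₗ = (1 - η) gₗ` and `tₗ = (1 + η) gₗ` bound
`‖∑ ξₗ Fₗ‖` from below and from above. Only the density of simple functions in `L¹` and their
stability under scaling enter, so the argument works in any normed space in place of `L¹`.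
-/

open MeasureTheory

theorem one_sub_mul_le_and_le_one_add_mul {a b η : ℝ} (hη₀ : 0 ≤ η) (hη₁ : η ≤ 1)
    (hab : |a - b| ≤ η * a / 2) : (1 - η) * b ≤ a ∧ a ≤ (1 + η) * b := by
  rw [abs_le] at hab
  constructor <;> nlinarith

theorem exists_forall_mem_sum_norm_sub_lt {ι E : Type*} [Fintype ι] [SeminormedAddCommGroup E]
    {D : Set E} {f : ι → E} (hfD : ∀ i, f i ∈ closure D) {δ : ℝ} (hδ : 0 < δ) :
    ∃ g : ι → E, (∀ i, g i ∈ D) ∧ ∑ i, ‖f i - g i‖ < δ := by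
  have hf : f ∈ closure (Set.univ.pi fun _ => D) := by
    rw [closure_pi_set]; exact fun i _ => hfD i
  have hopen : IsOpen {g : ι → E | ∑ i, ‖f i - g i‖ < δ} :=
    isOpen_lt (by fun_prop) continuous_const
  obtain ⟨g, hg, hgD⟩ := mem_closure_iff.1 hf _ hopen (by simpa using hδ)
  exact ⟨g, fun i => hgD i (Set.mem_univ i), hg⟩

section NormedSpace

variable {ι E : Type*} [Fintype ι] [NormedAddCommGroup E] [NormedSpace ℝ E]

theorem LinearIndependent.exists_pos_mul_norm_le_norm_sum_smul {v : ι → E}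
    (hv : LinearIndependent ℝ v) : ∃ m > 0, ∀ ξ : ι → ℝ, m * ‖ξ‖ ≤ ‖∑ i, ξ i • v i‖ := by
  rw [linearIndependent_iff_injective_fintypeLinearCombination, ← LinearMap.ker_eq_bot] at hv
  obtain ⟨K, -, hK⟩ := LinearMap.exists_antilipschitzWith _ hv
  simpa only [Fintype.linearCombination_apply] using
    antilipschitzWith_iff_exists_mul_le_norm.1 ⟨K, hK⟩

theorem LinearIndependent.of_norm_sum_smul_le {v w : ι → E} (hv : LinearIndependent ℝ v)
    {C : ℝ} (h : ∀ ξ : ι → ℝ, ‖∑ i, ξ i • v i‖ ≤ C * ‖∑ i, ξ i • w i‖) :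
    LinearIndependent ℝ w :=
  Fintype.linearIndependent_iff.2 fun ξ hξ =>
    Fintype.linearIndependent_iff.1 hv ξ <| norm_le_zero_iff.1 <| by simpa [hξ] using h ξ

theorem norm_sum_smul_le (ξ : ι → ℝ) (v : ι → E) :
    ‖∑ i, ξ i • v i‖ ≤ ‖ξ‖ * ∑ i, ‖v i‖ :=
  calc ‖∑ i, ξ i • v i‖ ≤ ∑ i, ‖ξ i‖ * ‖v i‖ := (norm_sum_le _ _).trans_eq (by simp [norm_smul])
    _ ≤ ∑ i, ‖ξ‖ * ‖v i‖ := by gcongr with i; exact norm_le_pi_norm ξ i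
    _ = ‖ξ‖ * ∑ i, ‖v i‖ := Finset.mul_sum _ _ _ |>.symm

theorem abs_norm_sum_smul_sub_le (ξ : ι → ℝ) (v w : ι → E) :
    |‖∑ i, ξ i • v i‖ - ‖∑ i, ξ i • w i‖| ≤ ‖ξ‖ * ∑ i, ‖v i - w i‖ := by
  refine (abs_norm_sub_norm_le _ _).trans ?_
  simpa only [Pi.sub_apply, smul_sub, Finset.sum_sub_distrib] using norm_sum_smul_le ξ (v - w)

theorem norm_sum_smul_const_smul (ξ : ι → ℝ) (c : ℝ) (v : ι → E) :
    ‖∑ i, ξ i • c • v i‖ = |c| * ‖∑ i, ξ i • v i‖ := by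
  simp only [smul_comm (ξ _) c, ← Finset.smul_sum, norm_smul, Real.norm_eq_abs]

theorem sum_norm_sub_smul_le (c : ℝ) (v w : ι → E) :
    ∑ i, ‖v i - c • w i‖ ≤ (1 + |1 - c|) * ∑ i, ‖v i - w i‖ + |1 - c| * ∑ i, ‖v i‖ := by
  simp only [Finset.mul_sum, ← Finset.sum_add_distrib]
  gcongr with i
  have hw : ‖w i‖ ≤ ‖v i‖ + ‖v i - w i‖ := by
    simpa using norm_sub_le (v i) (v i - w i)
  calc ‖v i - c • w i‖ = ‖(v i - w i) + (1 - c) • w i‖ := by rw [sub_smul, one_smul]; abel_nf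
    _ ≤ ‖v i - w i‖ + |1 - c| * ‖w i‖ := by
        grw [norm_add_le, norm_smul, Real.norm_eq_abs]
    _ ≤ _ := by grw [hw]; nlinarith [abs_nonneg (1 - c)]

theorem norm_sum_smul_sandwich {f g : ι → E} {m η : ℝ}
    (hm : ∀ ξ : ι → ℝ, m * ‖ξ‖ ≤ ‖∑ i, ξ i • f i‖) (hη₀ : 0 ≤ η) (hη₁ : η ≤ 1)
    (hfg : ∑ i, ‖f i - g i‖ ≤ η * m / 2) (ξ : ι → ℝ) :
    (1 - η) * ‖∑ i, ξ i • g i‖ ≤ ‖∑ i, ξ i • f i‖ ∧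
      ‖∑ i, ξ i • f i‖ ≤ (1 + η) * ‖∑ i, ξ i • g i‖ := by
  refine one_sub_mul_le_and_le_one_add_mul hη₀ hη₁ ?_
  calc _ ≤ ‖ξ‖ * ∑ i, ‖f i - g i‖ := abs_norm_sum_smul_sub_le ξ f g
    _ ≤ ‖ξ‖ * (η * m / 2) := by gcongr
    _ = η * (m * ‖ξ‖) / 2 := by ring
    _ ≤ η * ‖∑ i, ξ i • f i‖ / 2 := by gcongr; exact hm ξ

theorem LinearIndependent.exists_sandwich_of_mem_closure {f : ι → E}
    (hf : LinearIndependent ℝ f) {D : Set E} (hD : ∀ (c : ℝ), ∀ x ∈ D, c • x ∈ D)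
    (hfD : ∀ i, f i ∈ closure D) {ε : ℝ} (hε : 0 < ε) :
    ∃ s t : ι → E, (∀ i, s i ∈ D) ∧ (∀ i, t i ∈ D) ∧
      LinearIndependent ℝ s ∧ LinearIndependent ℝ t ∧
      ∑ i, ‖f i - s i‖ < ε ∧ ∑ i, ‖f i - t i‖ < ε ∧
      ∀ ξ : ι → ℝ, ‖∑ i, ξ i • s i‖ ≤ ‖∑ i, ξ i • f i‖ ∧
        ‖∑ i, ξ i • f i‖ ≤ ‖∑ i, ξ i • t i‖ := by
  obtain ⟨m, hm₀, hm⟩ := hf.exists_pos_mul_norm_le_norm_sum_smul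
  obtain ⟨η, hη₀, hη₁, hηf⟩ : ∃ η : ℝ, 0 < η ∧ η ≤ 1 / 2 ∧ η * ∑ i, ‖f i‖ < ε / 2 := by
    obtain ⟨c, hc₀, hc⟩ := exists_pos_mul_lt (half_pos hε) (∑ i, ‖f i‖)
    refine ⟨min (1 / 2) c, lt_min one_half_pos hc₀, min_le_left _ _, ?_⟩
    rw [mul_comm]
    exact (mul_le_mul_of_nonneg_left (min_le_right _ _) (by positivity)).trans_lt hc
  -- `η m / 2` feeds the sandwich; with `ε / 4` the error of `(1 ± η) g` is `< 3ε/8 + ε/2`.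
  obtain ⟨g, hgD, hg⟩ := exists_forall_mem_sum_norm_sub_lt hfD
    (lt_min (by positivity : 0 < η * m / 2) (by positivity : 0 < ε / 4))
  have hfg : ∑ i, ‖f i - g i‖ ≤ η * m / 2 := hg.le.trans (min_le_left _ _)
  have hsandwich := norm_sum_smul_sandwich hm hη₀.le (by linarith) hfg
  have hclose : ∀ c : ℝ, |1 - c| = η → ∑ i, ‖f i - c • g i‖ < ε := fun c hc => by
    have hsum := sum_norm_sub_smul_le c f g
    rw [hc] at hsum
    nlinarith [hg.trans_le (min_le_right _ _)]
  have hs_norm (ξ : ι → ℝ) : ‖∑ i, ξ i • (1 - η) • g i‖ = (1 - η) * ‖∑ i, ξ i • g i‖ := by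
    rw [norm_sum_smul_const_smul, abs_of_pos (by linarith)]
  have ht_norm (ξ : ι → ℝ) : ‖∑ i, ξ i • (1 + η) • g i‖ = (1 + η) * ‖∑ i, ξ i • g i‖ := by
    rw [norm_sum_smul_const_smul, abs_of_pos (by linarith)]
  refine ⟨fun i => (1 - η) • g i, fun i => (1 + η) • g i, fun i => hD _ _ (hgD i),
    fun i => hD _ _ (hgD i), ?_, ?_, hclose _ (by simp [hη₀.le]), hclose _ (by simp [hη₀.le]),
    fun ξ => by simpa only [hs_norm, ht_norm] using hsandwich ξ⟩
  · refine hf.of_norm_sum_smul_le (C := (1 + η) / (1 - η)) fun ξ => ?_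
    rw [hs_norm]
    calc _ ≤ (1 + η) * ‖∑ i, ξ i • g i‖ := (hsandwich ξ).2
      _ = (1 + η) / (1 - η) * ((1 - η) * ‖∑ i, ξ i • g i‖) := by
        field_simp [show 1 - η ≠ 0 by linarith]
  · exact hf.of_norm_sum_smul_le (C := 1) fun ξ => by
      simpa only [ht_norm, one_mul] using (hsandwich ξ).2

end NormedSpace

section L1

variable {X : Type*} [MeasurableSpace X] {ν : Measure X}

theorem integral_abs_eq_norm_of_ae_eq {u : X →₁[ν] ℝ} {G : X → ℝ} (h : u =ᵐ[ν] G) :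
    ∫ x, |G x| ∂ν = ‖u‖ := by
  rw [L1.norm_eq_integral_norm]
  exact integral_congr_ae (h.fun_comp norm).symm

theorem integral_abs_sum_mul_eq_norm_sum_smul {ι : Type*} [Fintype ι] {u : ι → X →₁[ν] ℝ}
    {G : ι → X → ℝ} (h : ∀ i, u i =ᵐ[ν] G i) (ξ : ι → ℝ) :
    ∫ x, |∑ i, ξ i * G i x| ∂ν = ‖∑ i, ξ i • u i‖ := by
  refine integral_abs_eq_norm_of_ae_eq ?_
  filter_upwards [Lp.coeFn_finsetSum Finset.univ (fun i => ξ i • u i),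
    ae_all_iff.2 fun i => Lp.coeFn_smul (ξ i) (u i), ae_all_iff.2 h] with x hsum hsmul hG
  rw [hsum, Finset.sum_apply]
  simp only [hsmul, hG, Pi.smul_apply, smul_eq_mul]

theorem integral_abs_sub_eq_norm_sub {u v : X →₁[ν] ℝ} {F G : X → ℝ} (hu : u =ᵐ[ν] F)
    (hv : v =ᵐ[ν] G) : ∫ x, |F x - G x| ∂ν = ‖u - v‖ := by
  refine integral_abs_eq_norm_of_ae_eq ?_
  filter_upwards [Lp.coeFn_sub u v, hu, hv] with x hsub hux hvx
  rw [hsub, Pi.sub_apply, hux, hvx]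

theorem smul_mem_Lp_simpleFunc (c : ℝ) {u : X →₁[ν] ℝ} (hu : u ∈ Lp.simpleFunc ℝ 1 ν) :
    c • u ∈ Lp.simpleFunc ℝ 1 ν :=
  letI := Lp.simpleFunc.smul (E := ℝ) (p := 1) (μ := ν) (𝕜 := ℝ)
  (c • (⟨u, hu⟩ : Lp.simpleFunc ℝ 1 ν)).2

theorem exists_simpleFunc_ae_eq_of_mem_Lp_simpleFunc {u : X →₁[ν] ℝ}
    (hu : u ∈ Lp.simpleFunc ℝ 1 ν) : ∃ φ : SimpleFunc X ℝ, Integrable φ ν ∧ u =ᵐ[ν] φ :=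
  ⟨_, memLp_one_iff_integrable.1 (Lp.simpleFunc.memLp ⟨u, hu⟩),
    (Lp.simpleFunc.toSimpleFunc_eq_toFun ⟨u, hu⟩).symm⟩

end L1

/-- Lemma 4: approximation of linearly independent `L¹` functions from below and
above by linearly independent simple functions. -/
theorem stmt3 {X : Type*} [MeasurableSpace X] (ν : Measure X)
    (N : ℕ) (F : Fin N → X → ℝ) (hF : ∀ l, Integrable (F l) ν)
    (hind : ∀ ξ : Fin N → ℝ, (∫ x, |∑ l, ξ l * F l x| ∂ν) = 0 → ξ = 0)
    (ε : ℝ) (hε : 0 < ε) :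
    ∃ s t : Fin N → SimpleFunc X ℝ,
      (∀ l, Integrable (s l) ν) ∧ (∀ l, Integrable (t l) ν) ∧
      (∀ ξ : Fin N → ℝ, (∫ x, |∑ l, ξ l * s l x| ∂ν) = 0 → ξ = 0) ∧
      (∀ ξ : Fin N → ℝ, (∫ x, |∑ l, ξ l * t l x| ∂ν) = 0 → ξ = 0) ∧
      (∑ l, ∫ x, |F l x - s l x| ∂ν) < ε ∧
      (∑ l, ∫ x, |F l x - t l x| ∂ν) < ε ∧
      (∀ ξ : Fin N → ℝ,
        (∫ x, |∑ l, ξ l * s l x| ∂ν) ≤ (∫ x, |∑ l, ξ l * F l x| ∂ν) ∧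
        (∫ x, |∑ l, ξ l * F l x| ∂ν) ≤ (∫ x, |∑ l, ξ l * t l x| ∂ν)) := by
  have hfF (l : Fin N) : (hF l).toL1 (F l) =ᵐ[ν] F l := (hF l).coeFn_toL1
  have hf : LinearIndependent ℝ fun l => (hF l).toL1 (F l) :=
    Fintype.linearIndependent_iff.2 fun ξ hξ => congrFun <| hind ξ <| by
      rw [integral_abs_sum_mul_eq_norm_sum_smul hfF, hξ, norm_zero]
  obtain ⟨u, v, huD, hvD, hu, hv, huε, hvε, hsandwich⟩ :=
    hf.exists_sandwich_of_mem_closure (fun c _ => smul_mem_Lp_simpleFunc c)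
      (fun l => Lp.simpleFunc.dense ENNReal.one_ne_top _) hε
  choose s hs hus using fun l => exists_simpleFunc_ae_eq_of_mem_Lp_simpleFunc (huD l)
  choose t ht hvt using fun l => exists_simpleFunc_ae_eq_of_mem_Lp_simpleFunc (hvD l)
  refine ⟨s, t, hs, ht, fun ξ hξ => ?_, fun ξ hξ => ?_, ?_, ?_, fun ξ => ?_⟩
  · rw [integral_abs_sum_mul_eq_norm_sum_smul hus, norm_eq_zero] at hξ
    exact funext (Fintype.linearIndependent_iff.1 hu ξ hξ)
  · rw [integral_abs_sum_mul_eq_norm_sum_smul hvt, norm_eq_zero] at hξ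
    exact funext (Fintype.linearIndependent_iff.1 hv ξ hξ)
  · exact (Finset.sum_congr rfl fun l _ =>
      integral_abs_sub_eq_norm_sub (hfF l) (hus l)).trans_lt huε
  · exact (Finset.sum_congr rfl fun l _ =>
      integral_abs_sub_eq_norm_sub (hfF l) (hvt l)).trans_lt hvε
  · rw [integral_abs_sum_mul_eq_norm_sum_smul hus, integral_abs_sum_mul_eq_norm_sum_smul hfF,
      integral_abs_sum_mul_eq_norm_sum_smul hvt]
    exact hsandwich ξ
end

section
/- Let $T:\mathbb{R}^N \to L^1(X,\nu)$ be the injective linear map $T(\xi) = \sum_{n=1}^N \xi_n F_n$, where $F_1,\dots,F_N$ are $\mathbb{R}$-linearly independent in $L^1(X,\nu)$. Then there exists a finite, even Borel measure $\rho$ on the unit sphere $\Sigma_{N-1}\subset\mathbb{R}^N$ such that $\|T(\xi)\|_1 = \tfrac12 \int_{\Sigma_{N-1}} |\langle \xi,\eta\rangle|\,d\rho(\eta)$ for all $\xi\in\mathbb{R}^N$. -/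
/-!
With `v x = (F₁ x, …, F_N x) ∈ ℝᴺ` we have
`|⟨ξ, v x⟩| = ‖v x‖ · |⟨ξ, v x / ‖v x‖⟩|`, so the push-forward of the finite measure `‖v‖ dν`
along `x ↦ v x / ‖v x‖` is a measure on the unit sphere representing `ξ ↦ ‖T ξ‖₁`. Adding its
reflection through the origin makes it even, and since the integrand is even this exactly doubles
the integral.
-/

open MeasureTheory

namespace MeasureTheory.Measure

section Symmetrize

variable {E : Type*} [MeasurableSpace E] [InvolutiveNeg E] [MeasurableNeg E]

noncomputable def symmetrize (ρ : Measure E) : Measure E := ρ + ρ.map Neg.neg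

instance (ρ : Measure E) [IsFiniteMeasure ρ] : IsFiniteMeasure ρ.symmetrize := by
  unfold symmetrize; infer_instance

theorem map_neg_symmetrize (ρ : Measure E) : ρ.symmetrize.map Neg.neg = ρ.symmetrize := by
  rw [symmetrize, Measure.map_add _ _ measurable_neg, map_map measurable_neg measurable_neg,
    neg_comp_neg, map_id, add_comm]

theorem ae_symmetrize {ρ : Measure E} {p : E → Prop} (h : ∀ᵐ η ∂ρ, p η)
    (hp : ∀ η, p η → p (-η)) : ∀ᵐ η ∂ρ.symmetrize, p η := by
  rw [symmetrize, ae_add_measure_iff, measurableEmbedding_neg.ae_map_iff]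
  exact ⟨h, h.mono hp⟩

theorem integral_symmetrize {G : Type*} [NormedAddCommGroup G] [NormedSpace ℝ G]
    (ρ : Measure E) {g : E → G} (hg : ∀ η, g (-η) = g η) :
    ∫ η, g η ∂ρ.symmetrize = 2 • ∫ η, g η ∂ρ := by
  have hint : Integrable g (ρ.map Neg.neg) ↔ Integrable g ρ := by
    simp [measurableEmbedding_neg.integrable_map_iff, Function.comp_def, hg]
  by_cases hρ : Integrable g ρ
  · rw [symmetrize, integral_add_measure hρ (hint.mpr hρ), measurableEmbedding_neg.integral_map]
    simp [hg, two_nsmul]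
  · rw [integral_undef hρ, integral_undef, smul_zero]
    rw [symmetrize, integrable_add_measure, hint]
    exact fun h => hρ h.1

end Symmetrize

section SpherePushforward

variable {X E : Type*} [MeasurableSpace X] [NormedAddCommGroup E] [NormedSpace ℝ E]
  [MeasurableSpace E] {ν : Measure X} {v : X → E}

/-- Points where `v x = 0` are sent to `0`, but they carry no mass. -/
noncomputable def spherePushforward (ν : Measure X) (v : X → E) : Measure E :=
  (ν.withDensity fun x => ‖v x‖ₑ).map fun x => ‖v x‖⁻¹ • v x

theorem isFiniteMeasure_spherePushforward (hv : HasFiniteIntegral v ν) :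
    IsFiniteMeasure (ν.spherePushforward v) := by
  have := isFiniteMeasure_withDensity hv.ne
  unfold spherePushforward; infer_instance

variable [BorelSpace E]

theorem aemeasurable_inv_norm_smul_withDensity (hv : AEMeasurable v ν) :
    AEMeasurable (fun x => ‖v x‖⁻¹ • v x) (ν.withDensity fun x => ‖v x‖ₑ) :=
  (hv.norm.inv.smul hv).mono_ac (withDensity_absolutelyContinuous _ _)

theorem ae_norm_eq_one_spherePushforward (hv : AEMeasurable v ν) :
    ∀ᵐ η ∂ν.spherePushforward v, ‖η‖ = 1 := by
  rw [spherePushforward, ae_map_iff (aemeasurable_inv_norm_smul_withDensity hv)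
    (measurableSet_eq_fun measurable_norm measurable_const), ae_withDensity_iff' hv.enorm]
  refine ae_of_all _ fun x hx => norm_smul_inv_norm ?_
  simpa using hx

theorem integral_spherePushforward {G : Type*} [NormedAddCommGroup G] [NormedSpace ℝ G]
    (hv : AEMeasurable v ν) {g : E → G} (hgm : AEStronglyMeasurable g (ν.spherePushforward v))
    (hg : ∀ c : ℝ, 0 ≤ c → ∀ η, g (c • η) = c • g η) :
    ∫ η, g η ∂ν.spherePushforward v = ∫ x, g (v x) ∂ν := by
  rw [spherePushforward, integral_map (aemeasurable_inv_norm_smul_withDensity hv) hgm]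
  refine (integral_withDensity_eq_integral_smul₀ (f := fun x => ‖v x‖₊) hv.nnnorm _).trans ?_
  refine integral_congr_ae (ae_of_all _ fun x => ?_)
  by_cases hx : v x = 0
  · simpa [hx] using (hg 0 le_rfl 0).symm
  · simp [NNReal.smul_def, ← hg _ (norm_nonneg _), hx]

end SpherePushforward

end MeasureTheory.Measure

theorem EuclideanSpace.inner_toLp_left {ι : Type*} [Fintype ι] (ξ : ι → ℝ)
    (η : EuclideanSpace ℝ ι) : inner ℝ (WithLp.toLp 2 ξ) η = ∑ i, ξ i * η i := by
  simp [EuclideanSpace.inner_eq_star_dotProduct, dotProduct, mul_comm]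

theorem stmt5_general {X : Type*} [MeasurableSpace X] (ν : Measure X)
    (N : ℕ) (F : Fin N → X → ℝ) (hF : ∀ n, Integrable (F n) ν) :
    ∃ ρ : Measure (Fin N → ℝ), IsFiniteMeasure ρ ∧
      ρ.map (fun η => -η) = ρ ∧
      ρ {η : Fin N → ℝ | (∑ i, (η i) ^ 2) ≠ 1} = 0 ∧
      ∀ ξ : Fin N → ℝ,
        (∫ x, |∑ n, ξ n * F n x| ∂ν) = (1 / 2) * ∫ η, |∑ i, ξ i * η i| ∂ρ := by
  set v : X → EuclideanSpace ℝ (Fin N) := fun x => WithLp.toLp 2 fun n => F n x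
  have hv : Integrable v ν := Integrable.of_eval_piLp hF
  have := Measure.isFiniteMeasure_spherePushforward hv.2
  set ρ₀ := (ν.spherePushforward v).map (MeasurableEquiv.toLp 2 (Fin N → ℝ)).symm
  have hsphere : ∀ᵐ η ∂ρ₀, ∑ i, η i ^ 2 = 1 := by
    rw [MeasurableEquiv.measurableEmbedding _ |>.ae_map_iff]
    filter_upwards [Measure.ae_norm_eq_one_spherePushforward hv.aemeasurable] with η hη
    simp [← EuclideanSpace.real_norm_sq_eq, hη]
  refine ⟨ρ₀.symmetrize, inferInstance, Measure.map_neg_symmetrize ρ₀,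
    ae_iff.mp (Measure.ae_symmetrize hsphere (by simp)), fun ξ => ?_⟩
  set g : EuclideanSpace ℝ (Fin N) → ℝ := fun η => |inner ℝ (WithLp.toLp 2 ξ) η|
  have hg : ∀ c : ℝ, 0 ≤ c → ∀ η, g (c • η) = c • g η := fun c hc η => by
    simp [g, inner_smul_right, abs_mul, abs_of_nonneg hc]
  calc ∫ x, |∑ n, ξ n * F n x| ∂ν = ∫ x, g (v x) ∂ν := by
        simp [g, v, EuclideanSpace.inner_toLp_left]
    _ = ∫ η, g η ∂ν.spherePushforward v :=
      (Measure.integral_spherePushforward hv.aemeasurable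
        (continuous_const.inner continuous_id).abs.aestronglyMeasurable hg).symm
    _ = ∫ η, |∑ i, ξ i * η i| ∂ρ₀ := by
      simp [ρ₀, integral_map_equiv, g, EuclideanSpace.inner_toLp_left]
    _ = 1 / 2 * ∫ η, |∑ i, ξ i * η i| ∂ρ₀.symmetrize := by
      rw [Measure.integral_symmetrize ρ₀ fun η => by simp [Finset.sum_neg_distrib, abs_neg]]
      simp

/-- Lemma 2: the norm `ξ ↦ ‖T ξ‖₁ = ∫ |∑ ξ n F n| dν` is the support-type
integral of a finite even Borel measure on the unit sphere, i.e. the unit ball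
of this norm is dual to a zonoid. -/
theorem stmt5 {X : Type*} [MeasurableSpace X] (ν : Measure X)
    (N : ℕ) (F : Fin N → X → ℝ) (hF : ∀ n, Integrable (F n) ν)
    (hind : ∀ ξ : Fin N → ℝ, (∫ x, |∑ n, ξ n * F n x| ∂ν) = 0 → ξ = 0) :
    ∃ ρ : Measure (Fin N → ℝ), IsFiniteMeasure ρ ∧
      ρ.map (fun η => -η) = ρ ∧
      ρ {η : Fin N → ℝ | (∑ i, (η i) ^ 2) ≠ 1} = 0 ∧
      ∀ ξ : Fin N → ℝ,
        (∫ x, |∑ n, ξ n * F n x| ∂ν) = (1 / 2) * ∫ η, |∑ i, ξ i * η i| ∂ρ :=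
  stmt5_general ν N F hF
end

section
/- Let $F_1,\dots,F_N$ be $\mathbb{R}$-linearly independent simple functions in $L^1(X,\nu)$ with representation $F_l = \sum_{m=1}^M a_{lm}\chi_{E_m}$ for an $N\times M$ rank-$N$ matrix $A=(a_{lm})$ and disjoint measurable sets $E_m$ with $0<\nu(E_m)<\infty$. Then $\int_{X^N}|\det(F_l(x_n))|\,d\nu^N(\mathbf{x}) = N!\sum_{|I|=N}|\det A_I|\prod_{m\in I}\nu(E_m)$, where the sum is over $N$-element subsets $I\subseteq\{1,\dots,M\}$ and $A_I$ is the submatrix of $A$ with columns in $I$. -/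
/-!
Write the matrix `(F_l(x_n))` as `A Z(x)` with `Z(x) = (χ_{E_m}(x_n))`. Multilinearity of the
determinant in the columns expands `det (A Z(x))` as `∑_g det A_g ∏_n χ_{E_{g n}}(x_n)` over
all maps `g : Fin N → Fin M`, where `A_g` has columns `g 0, …, g (N-1)`. Since the `E_m` are
disjoint, for each `x` at most one term is nonzero, so the absolute value passes inside the sum,
and Fubini integrates the product of indicators to `∏_n ν(E_{g n})`. The terms with `g`
non-injective vanish; the others, grouped by the image `I` of `g`, are `N!` copies of the term
of `I`.
-/

open Finset Function Matrix MeasureTheory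

theorem Matrix.det_mul_eq_sum_det_submatrix_mul_prod {R n κ : Type*} [CommRing R]
    [Fintype n] [DecidableEq n] [Fintype κ] (A : Matrix n κ R) (Z : Matrix κ n R) :
    (A * Z).det = ∑ g : n → κ, (A.submatrix id g).det * ∏ i, Z (g i) i := by
  have hrows : (A * Z)ᵀ = fun i => ∑ m, Z m i • Aᵀ m := by
    ext i j; simp [mul_apply, mul_comm]
  rw [← det_transpose, hrows]
  change (detRowAlternating : (n → R) [⋀^n]→ₗ[R] R).toMultilinearMap _ = _
  rw [MultilinearMap.map_sum]
  refine Finset.sum_congr rfl fun g _ => ?_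
  rw [MultilinearMap.map_smul_univ, smul_eq_mul, mul_comm, ← det_transpose (A.submatrix id g)]
  rfl

theorem Finset.abs_sum_eq_sum_abs_of_at_most_one_ne_zero {ι G : Type*} [AddCommGroup G]
    [LinearOrder G] [IsOrderedAddMonoid G] (s : Finset ι) (f : ι → G)
    (hf : ∀ i ∈ s, ∀ j ∈ s, f i ≠ 0 → f j ≠ 0 → i = j) :
    |∑ i ∈ s, f i| = ∑ i ∈ s, |f i| := by
  by_cases h : ∃ i ∈ s, f i ≠ 0
  · obtain ⟨i, hi, hfi⟩ := h
    have hzero : ∀ j ∈ s, j ≠ i → f j = 0 := fun j hj hji => by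
      by_contra hfj; exact hji (hf j hj i hi hfj hfi)
    rw [sum_eq_single_of_mem i hi hzero,
      sum_eq_single_of_mem i hi fun j hj hji => by rw [hzero j hj hji, abs_zero]]
  · push Not at h
    rw [sum_eq_zero h, sum_eq_zero fun i hi => by rw [h i hi, abs_zero], abs_zero]

noncomputable def indicatorMatrix {X κ n : Type*} (E : κ → Set X) (x : n → X) :
    Matrix κ n ℝ :=
  Matrix.of fun m i => (E m).indicator (fun _ => 1) (x i)

theorem abs_det_mul_indicatorMatrix {X κ n : Type*} [Fintype κ] [Fintype n] [DecidableEq n]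
    (A : Matrix n κ ℝ) {E : κ → Set X} (hE : Pairwise fun m m' => Disjoint (E m) (E m'))
    (x : n → X) :
    |(A * indicatorMatrix E x).det| =
      ∑ g : n → κ,
        |(A.submatrix id g).det| * ∏ i, (E (g i)).indicator (fun _ => 1) (x i) := by
  rw [det_mul_eq_sum_det_submatrix_mul_prod, abs_sum_eq_sum_abs_of_at_most_one_ne_zero]
  all_goals simp only [indicatorMatrix, of_apply]
  · refine sum_congr rfl fun g _ => ?_
    have hZ : 0 ≤ ∏ i, (E (g i)).indicator (fun _ => (1 : ℝ)) (x i) :=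
      prod_nonneg fun i _ => Set.indicator_nonneg (fun _ _ => zero_le_one) _
    rw [abs_mul, abs_of_nonneg hZ]
  · intro g _ g' _ hg hg'
    have hmem : ∀ {g : n → κ},
        (A.submatrix id g).det * ∏ i, (E (g i)).indicator (fun _ => 1) (x i) ≠ 0 →
        ∀ i, x i ∈ E (g i) := fun hg i => by
      by_contra hi
      exact hg (by rw [prod_eq_zero (mem_univ i) (Set.indicator_of_notMem hi _), mul_zero])
    funext i
    by_contra hne
    exact Set.disjoint_left.mp (hE hne) (hmem hg i) (hmem hg' i)

theorem integral_prod_indicator_one {n : Type*} [Fintype n] {X : n → Type*}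
    [∀ i, MeasurableSpace (X i)] (μ : ∀ i, Measure (X i)) [∀ i, SigmaFinite (μ i)]
    {s : ∀ i, Set (X i)} (hs : ∀ i, MeasurableSet (s i)) :
    ∫ x : ∀ i, X i, ∏ i, (s i).indicator (fun _ => (1 : ℝ)) (x i) ∂(Measure.pi μ) =
      ∏ i, (μ i).real (s i) := by
  rw [integral_fintype_prod_eq_prod]
  exact prod_congr rfl fun i _ => integral_indicator_one (hs i)

theorem integrable_prod_indicator_one {n : Type*} [Fintype n] {X : n → Type*}
    [∀ i, MeasurableSpace (X i)] (μ : ∀ i, Measure (X i)) [∀ i, SigmaFinite (μ i)]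
    {s : ∀ i, Set (X i)} (hs : ∀ i, MeasurableSet (s i)) (hfin : ∀ i, μ i (s i) ≠ ⊤) :
    Integrable (fun x : ∀ i, X i => ∏ i, (s i).indicator (fun _ => (1 : ℝ)) (x i))
      (Measure.pi μ) :=
  Integrable.fintype_prod_dep fun i => (integrable_indicator_iff (hs i)).mpr
    (integrableOn_const (hfin i))

theorem Finset.exists_perm_orderEmbOfFin_image_comp_eq {κ : Type*} [LinearOrder κ] {N : ℕ}
    {g : Fin N → κ} (hg : Injective g) (h : (univ.image g).card = N) :
    ∃ σ : Equiv.Perm (Fin N), (univ.image g).orderEmbOfFin h ∘ σ = g := by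
  classical
  let e := (univ.image g).orderIsoOfFin h
  let t : Fin N → Fin N := fun i => e.symm ⟨g i, mem_image_of_mem g (mem_univ i)⟩
  have ht : Bijective t := Finite.injective_iff_bijective.mp fun a b hab =>
    hg (congrArg Subtype.val (e.symm.injective hab))
  refine ⟨Equiv.ofBijective t ht, funext fun i => ?_⟩
  simp [t, e, ← coe_orderIsoOfFin_apply]

theorem Finset.sum_eq_factorial_smul_sum_powersetCard {κ M : Type*} [Fintype κ] [LinearOrder κ]
    [AddCommMonoid M] (N : ℕ) (T : (Fin N → κ) → M) (hT : ∀ g, ¬Injective g → T g = 0)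
    (hTperm : ∀ g (σ : Equiv.Perm (Fin N)), T (g ∘ σ) = T g) :
    ∑ g, T g = N.factorial • ∑ I ∈ (powersetCard N (univ : Finset κ)).attach,
      T (I.1.orderEmbOfFin (mem_powersetCard_univ.mp I.2)) := by
  classical
  let emb : {I // I ∈ powersetCard N (univ : Finset κ)} → Fin N ↪o κ :=
    fun I => I.1.orderEmbOfFin (mem_powersetCard_univ.mp I.2)
  change _ = _ • ∑ I ∈ _, T (emb I)
  calc ∑ g, T g = ∑ g with Injective g, T g :=
        (sum_filter_of_ne fun g _ hg => not_not.mp (mt (hT g) hg)).symm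
    _ = ∑ p ∈ (powersetCard N univ).attach ×ˢ (univ : Finset (Equiv.Perm (Fin N))),
          T (emb p.1 ∘ p.2) := by
        symm
        apply sum_nbij (fun p => emb p.1 ∘ p.2)
        · intro p _
          simpa using (emb p.1).injective.comp p.2.injective
        · rintro ⟨I, σ⟩ - ⟨J, τ⟩ - h
          have hIJ : I = J := by
            have hrange := congrArg Set.range h
            simp only [Set.range_comp, EquivLike.range_eq_univ, Set.image_univ, emb,
              range_orderEmbOfFin, coe_inj] at hrange
            exact Subtype.ext hrange
          subst hIJ
          simp only [Prod.mk.injEq, true_and]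
          exact Equiv.ext fun i => (emb I).injective (congrFun h i)
        · intro g hg
          simp only [coe_filter, mem_univ, true_and, Set.mem_ofPred_eq] at hg
          have hcard : (univ.image g).card = N := by
            rw [card_image_of_injective _ hg, card_univ, Fintype.card_fin]
          obtain ⟨σ, hσ⟩ := exists_perm_orderEmbOfFin_image_comp_eq hg hcard
          exact ⟨(⟨univ.image g, mem_powersetCard_univ.mpr hcard⟩, σ), by simp, hσ⟩
        · intro _ _
          rfl
    _ = ∑ I ∈ (powersetCard N univ).attach, ∑ σ : Equiv.Perm (Fin N), T (emb I ∘ σ) :=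
        sum_product _ _ _
    _ = _ := by
        simp only [hTperm, sum_const, card_univ, Fintype.card_perm, Fintype.card_fin, smul_sum]

theorem stmt19_general {X : Type*} [MeasurableSpace X] (ν : Measure X) [SigmaFinite ν]
    (N M : ℕ) (A : Matrix (Fin N) (Fin M) ℝ)
    (E : Fin M → Set X) (hE : ∀ m, MeasurableSet (E m))
    (hdisj : Pairwise fun m m' => Disjoint (E m) (E m'))
    (hfin : ∀ m, ν (E m) < ⊤)
    (F : Fin N → X → ℝ)
    (hF : ∀ l x, F l x = ∑ m, A l m * (E m).indicator (fun _ => (1 : ℝ)) x) :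
    ∫ x : Fin N → X, |Matrix.det (Matrix.of fun l n => F l (x n))|
        ∂(Measure.pi fun _ => ν)
      = (N.factorial : ℝ) *
        ∑ I ∈ (Finset.powersetCard N (Finset.univ : Finset (Fin M))).attach,
          |(A.submatrix id fun i =>
              ((I.1.orderIsoOfFin (Finset.mem_powersetCard_univ.mp I.2) i : Fin M))).det| *
            ∏ i : Fin N,
              (ν (E ((I.1.orderIsoOfFin (Finset.mem_powersetCard_univ.mp I.2) i : Fin M)))).toReal := by
  have hmat : ∀ x : Fin N → X, Matrix.of (fun l n => F l (x n)) = A * indicatorMatrix E x := by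
    intro x; ext l n; simp [hF, mul_apply, indicatorMatrix]
  simp_rw [hmat, abs_det_mul_indicatorMatrix A hdisj]
  rw [integral_finsetSum _ fun g _ => (integrable_prod_indicator_one (fun _ => ν)
    (fun i => hE (g i)) fun i => (hfin (g i)).ne).const_mul _]
  simp_rw [integral_const_mul, integral_prod_indicator_one (fun _ => ν) fun i => hE _]
  rw [sum_eq_factorial_smul_sum_powersetCard, nsmul_eq_mul]
  · simp [coe_orderIsoOfFin_apply, measureReal_def]
  · intro g hg
    obtain ⟨i, j, hij, hne⟩ := not_injective_iff.mp hg
    rw [det_zero_of_column_eq hne fun k => by simp [hij], abs_zero, zero_mul]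
  · intro g σ
    rw [← abs_det_submatrix_equiv_equiv (Equiv.refl _) σ (A.submatrix id g), submatrix_submatrix]
    simp only [Function.comp_apply]
    exact congrArg _ (Equiv.prod_comp σ fun i => ν.real (E (g i)))

/-- The identity (4.17): for simple functions `F_l = ∑_m a_{lm} χ_{E_m}` with
`A = (a_{lm})` of rank `N` and the `E_m` disjoint measurable sets of finite
positive measure,
`∫_{X^N} |det(F_l(x_n))| dν^N = N! ∑_{|I|=N} |det A_I| ∏_{m ∈ I} ν(E_m)`. -/
theorem stmt19 {X : Type*} [MeasurableSpace X] (ν : Measure X) [SigmaFinite ν]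
    (N M : ℕ) (A : Matrix (Fin N) (Fin M) ℝ) (hA : A.rank = N)
    (E : Fin M → Set X) (hE : ∀ m, MeasurableSet (E m))
    (hdisj : Pairwise fun m m' => Disjoint (E m) (E m'))
    (hpos : ∀ m, 0 < ν (E m)) (hfin : ∀ m, ν (E m) < ⊤)
    (F : Fin N → X → ℝ)
    (hF : ∀ l x, F l x = ∑ m, A l m * (E m).indicator (fun _ => (1 : ℝ)) x)
    (hind : ∀ ξ : Fin N → ℝ, (∫ x, |∑ l, ξ l * F l x| ∂ν) = 0 → ξ = 0) :
    ∫ x : Fin N → X, |Matrix.det (Matrix.of fun l n => F l (x n))|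
        ∂(Measure.pi fun _ => ν)
      = (N.factorial : ℝ) *
        ∑ I ∈ (Finset.powersetCard N (Finset.univ : Finset (Fin M))).attach,
          |(A.submatrix id fun i =>
              ((I.1.orderIsoOfFin (Finset.mem_powersetCard_univ.mp I.2) i : Fin M))).det| *
            ∏ i : Fin N,
              (ν (E ((I.1.orderIsoOfFin (Finset.mem_powersetCard_univ.mp I.2) i : Fin M)))).toReal :=
  stmt19_general ν N M A E hE hdisj hfin F hF
end
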